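/- arXiv:2005.11232 — 8 statements merged into one kernel-verified Lean document; each statement's English description precedes it below -/
import Mathlib

section
/- Let $w_+, w_- \in \mathbb{C} \setminus \{0\}$ be nonzero complex numbers such that the angle between $w_+$ and $w_-$ (as vectors in $\mathbb{R}^2$) does not exceed $\theta$ for some $0 \le \theta < \pi$. Then $w = w_+ + w_- \ne 0$ and $\frac{|w_+| + |w_-|}{|w|} \le \frac{1}{\cos(\theta/2)}$. -/
noncomputable def cangle (u v : ℂ) : ℝ :=
  Real.arccos ((u * (starRingEnd ℂ) v).re / (‖u‖ * ‖v‖))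

/-!
Writing `a = ‖w₊‖`, `b = ‖w₋‖` and `φ` for the angle, `‖w₊ + w₋‖² = a² + b² + 2ab cos φ`, and
`cos φ ≥ cos θ` by monotonicity of `cos` on `[0, π]`. The half-angle formula then gives
`a² + b² + 2ab cos θ - (a + b)² cos²(θ/2) = (1 - cos θ)(a - b)² / 2 ≥ 0`,
so `‖w₊ + w₋‖ ≥ (a + b) cos(θ/2)`, which is positive as soon as `θ < π`.
-/

open Complex

section
variable (u v : ℂ)

theorem re_mul_conj_eq_norm_mul_norm_mul_cos_cangle :
    (u * starRingEnd ℂ v).re = ‖u‖ * ‖v‖ * Real.cos (cangle u v) := by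
  have hre : |(u * starRingEnd ℂ v).re| ≤ ‖u‖ * ‖v‖ :=
    (abs_re_le_norm _).trans_eq (by simp)
  rcases (mul_nonneg (norm_nonneg u) (norm_nonneg v)).eq_or_lt with h0 | hpos
  · rw [← h0, zero_mul]
    exact abs_nonpos_iff.mp (h0 ▸ hre)
  · have hquot : |(u * starRingEnd ℂ v).re / (‖u‖ * ‖v‖)| ≤ 1 := by
      rw [abs_div, abs_of_pos hpos]
      exact div_le_one_of_le₀ hre hpos.le
    rw [cangle, Real.cos_arccos (abs_le.mp hquot).1 (abs_le.mp hquot).2,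
      mul_div_cancel₀ _ hpos.ne']

theorem norm_add_sq_eq_cangle :
    ‖u + v‖ ^ 2 = ‖u‖ ^ 2 + ‖v‖ ^ 2 + 2 * (‖u‖ * ‖v‖ * Real.cos (cangle u v)) := by
  rw [← re_mul_conj_eq_norm_mul_norm_mul_cos_cangle, Complex.sq_norm, Complex.sq_norm,
    Complex.sq_norm, normSq_add]

end

theorem sq_add_mul_cos_half_sq_le (a b θ : ℝ) :
    (a + b) ^ 2 * Real.cos (θ / 2) ^ 2 ≤ a ^ 2 + b ^ 2 + 2 * (a * b * Real.cos θ) := by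
  have hhalf : Real.cos (θ / 2) ^ 2 = 1 / 2 + Real.cos θ / 2 := by
    rw [Real.cos_sq, mul_div_cancel₀ θ two_ne_zero]
  rw [hhalf]
  nlinarith [Real.cos_le_one θ, sq_nonneg (a - b)]

theorem norm_add_norm_mul_cos_half_le_norm_add {θ : ℝ} (hθπ : θ ≤ Real.pi) {u v : ℂ}
    (hang : cangle u v ≤ θ) :
    (‖u‖ + ‖v‖) * Real.cos (θ / 2) ≤ ‖u + v‖ := by
  have hang0 : 0 ≤ cangle u v := Real.arccos_nonneg _
  have hcos : Real.cos θ ≤ Real.cos (cangle u v) :=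
    Real.cos_le_cos_of_nonneg_of_le_pi hang0 hθπ hang
  have hcos_half : 0 ≤ Real.cos (θ / 2) :=
    Real.cos_nonneg_of_mem_Icc ⟨by linarith [Real.pi_pos], by linarith⟩
  have hsq : ((‖u‖ + ‖v‖) * Real.cos (θ / 2)) ^ 2 ≤ ‖u + v‖ ^ 2 := by
    calc ((‖u‖ + ‖v‖) * Real.cos (θ / 2)) ^ 2
        ≤ ‖u‖ ^ 2 + ‖v‖ ^ 2 + 2 * (‖u‖ * ‖v‖ * Real.cos θ) := by
          rw [mul_pow]
          exact sq_add_mul_cos_half_sq_le _ _ _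
      _ ≤ ‖u + v‖ ^ 2 := by
          rw [norm_add_sq_eq_cangle]
          gcongr
  exact (pow_le_pow_iff_left₀ (by positivity) (norm_nonneg _) two_ne_zero).mp hsq

theorem stmt0_general (θ : ℝ) (hθπ : θ < Real.pi)
    (wp wm : ℂ) (hwp : wp ≠ 0) (hwm : wm ≠ 0)
    (hang : cangle wp wm ≤ θ) :
    wp + wm ≠ 0 ∧
      (‖wp‖ + ‖wm‖) / ‖wp + wm‖ ≤ 1 / Real.cos (θ / 2) := by
  have hθ0 : 0 ≤ θ := (Real.arccos_nonneg _).trans hang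
  have hcos_half : 0 < Real.cos (θ / 2) :=
    Real.cos_pos_of_mem_Ioo ⟨by linarith [Real.pi_pos], by linarith⟩
  have hsum : 0 < ‖wp‖ + ‖wm‖ := by positivity
  have hle := norm_add_norm_mul_cos_half_le_norm_add hθπ.le hang
  have hnorm : 0 < ‖wp + wm‖ := (mul_pos hsum hcos_half).trans_le hle
  refine ⟨norm_pos_iff.mp hnorm, ?_⟩
  rw [div_le_div_iff₀ hnorm hcos_half, one_mul]
  exact hle

theorem stmt0 (θ : ℝ) (hθ0 : 0 ≤ θ) (hθπ : θ < Real.pi)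
    (wp wm : ℂ) (hwp : wp ≠ 0) (hwm : wm ≠ 0)
    (hang : cangle wp wm ≤ θ) :
    wp + wm ≠ 0 ∧
      (‖wp‖ + ‖wm‖) / ‖wp + wm‖ ≤ 1 / Real.cos (θ / 2) :=
  stmt0_general θ hθπ wp wm hwp hwm hang
end

section
/- Let $w_+, w_- \in \mathbb{C} \setminus \{0\}$ be nonzero complex numbers such that the angle between $w_+$ and $w_-$ does not exceed $\theta$ for some $0 \le \theta < \pi$, and let $w = w_+ + w_-$ (so $w \ne 0$). Then $\left| \mathrm{Im} \frac{w_+ - w_-}{w} \right| \le \tan(\theta/2)$. -/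
/-!
With `z = w₊ · conj w₋`, the quotient has imaginary part `2 Im z / |w₊ + w₋|²`, and
`|w₊ + w₋|² = |w₊|² + |w₋|² + 2 Re z ≥ 2 (|z| + Re z)`. The angle hypothesis says that `z`
lies in the sector `|arg z| ≤ θ`, on which
`|Im z| / (|z| + Re z) = |tan (arg z / 2)| ≤ tan (θ / 2)`.
-/

open ComplexConjugate

namespace Complex

theorem im_sub_div_add (u v : ℂ) :
    ((u - v) / (u + v)).im = 2 * (u * conj v).im / normSq (u + v) := by
  rw [div_im, ← sub_div]
  congr 1
  simp only [sub_re, sub_im, add_re, add_im, mul_im, conj_re, conj_im]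
  ring

theorem two_mul_norm_add_re_le_normSq_add (u v : ℂ) :
    2 * (‖u * conj v‖ + (u * conj v).re) ≤ normSq (u + v) := by
  rw [normSq_add, ← Complex.sq_norm, ← Complex.sq_norm, norm_mul, norm_conj]
  nlinarith [sq_nonneg (‖u‖ - ‖v‖)]

theorem norm_mul_cos_le_re_of_cangle_le {u v : ℂ} {θ : ℝ} (hθπ : θ ≤ Real.pi)
    (h : cangle u v ≤ θ) : ‖u * conj v‖ * Real.cos θ ≤ (u * conj v).re := by
  set z := u * conj v
  have hnorm : ‖u‖ * ‖v‖ = ‖z‖ := by rw [norm_mul, norm_conj]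
  rw [cangle, hnorm] at h
  have hx : |z.re / ‖z‖| ≤ 1 := by
    rw [abs_div, abs_norm]
    exact div_le_one_of_le₀ (abs_re_le_norm z) (norm_nonneg z)
  have hcos : Real.cos θ ≤ z.re / ‖z‖ := by
    calc Real.cos θ ≤ Real.cos (Real.arccos (z.re / ‖z‖)) :=
          Real.cos_le_cos_of_nonneg_of_le_pi (Real.arccos_nonneg _) hθπ h
      _ = z.re / ‖z‖ := Real.cos_arccos (abs_le.1 hx).1 (abs_le.1 hx).2
  calc ‖z‖ * Real.cos θ ≤ ‖z‖ * (z.re / ‖z‖) :=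
        mul_le_mul_of_nonneg_left hcos (norm_nonneg z)
    _ = z.re := mul_div_cancel_of_imp' fun hz ↦ by rw [norm_eq_zero.1 hz, zero_re]

theorem abs_im_le_tan_half_mul_norm_add_re {z : ℂ} {θ : ℝ} (hθ0 : 0 ≤ θ)
    (hθπ : θ < Real.pi) (h : ‖z‖ * Real.cos θ ≤ z.re) : |z.im| ≤ Real.tan (θ / 2) * (‖z‖ + z.re) := by
  set s := Real.sin (θ / 2)
  set c := Real.cos (θ / 2)
  have hs : 0 ≤ s := Real.sin_nonneg_of_nonneg_of_le_pi (by linarith) (by linarith)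
  have hc : 0 < c := Real.cos_pos_of_mem_Ioo ⟨by linarith, by linarith⟩
  have hcosθ : Real.cos θ = c ^ 2 - s ^ 2 := by
    rw [← Real.cos_two_mul', mul_div_cancel₀ θ two_ne_zero]
  have hsc : s ^ 2 + c ^ 2 = 1 := Real.sin_sq_add_cos_sq _
  have him : z.im ^ 2 = ‖z‖ ^ 2 - z.re ^ 2 := (sq_norm_sub_sq_re z).symm
  have hnorm_add_re : 0 ≤ ‖z‖ + z.re := by linarith [neg_abs_le z.re, abs_re_le_norm z]
  have hgap : (s * (‖z‖ + z.re)) ^ 2 - (z.im * c) ^ 2 =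
      (‖z‖ + z.re) * (z.re - ‖z‖ * Real.cos θ) := by
    linear_combination
      (-c ^ 2) * him + (‖z‖ + z.re) * z.re * hsc + (‖z‖ + z.re) * ‖z‖ * hcosθ
  have hsq : (z.im * c) ^ 2 ≤ (s * (‖z‖ + z.re)) ^ 2 :=
    sub_nonneg.1 (hgap ▸ mul_nonneg hnorm_add_re (sub_nonneg.2 h))
  rw [Real.tan_eq_sin_div_cos, div_mul_eq_mul_div, le_div_iff₀ hc, ← abs_of_pos hc, ← abs_mul]
  exact abs_le_of_sq_le_sq hsq (mul_nonneg hs hnorm_add_re)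

end Complex

open Complex

theorem stmt1_general (θ : ℝ) (hθπ : θ < Real.pi)
    (wp wm : ℂ)
    (hang : cangle wp wm ≤ θ) :
    |((wp - wm) / (wp + wm)).im| ≤ Real.tan (θ / 2) := by
  set z := wp * conj wm
  have hθ0 : 0 ≤ θ := (Real.arccos_nonneg _).trans hang
  have htan : 0 ≤ Real.tan (θ / 2) :=
    Real.tan_nonneg_of_nonneg_of_le_pi_div_two (by linarith) (by linarith)
  have hz : |z.im| ≤ Real.tan (θ / 2) * (‖z‖ + z.re) :=
    abs_im_le_tan_half_mul_norm_add_re hθ0 hθπ (norm_mul_cos_le_re_of_cangle_le hθπ.le hang)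
  rw [im_sub_div_add, abs_div, abs_of_nonneg (normSq_nonneg _)]
  refine div_le_of_le_mul₀ (normSq_nonneg _) htan ?_
  calc |2 * z.im| = 2 * |z.im| := by rw [abs_mul, abs_two]
    _ ≤ Real.tan (θ / 2) * (2 * (‖z‖ + z.re)) := by linarith
    _ ≤ Real.tan (θ / 2) * normSq (wp + wm) :=
      mul_le_mul_of_nonneg_left (two_mul_norm_add_re_le_normSq_add wp wm) htan

theorem stmt1 (θ : ℝ) (hθ0 : 0 ≤ θ) (hθπ : θ < Real.pi)
    (wp wm : ℂ) (hwp : wp ≠ 0) (hwm : wm ≠ 0)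
    (hang : cangle wp wm ≤ θ) :
    |((wp - wm) / (wp + wm)).im| ≤ Real.tan (θ / 2) :=
  stmt1_general θ hθπ wp wm hang
end

section
/- Let $v_{++}, v_{+-}, v_{-+}, v_{--} \in \mathbb{C} \setminus \{0\}$ be nonzero complex numbers such that the angles between $v_{++}$ and $v_{+-}$, between $v_{++}$ and $v_{-+}$, between $v_{--}$ and $v_{+-}$, and between $v_{--}$ and $v_{-+}$ each do not exceed $\theta$ for some $0 \le \theta < \pi/2$. Then $v = v_{++} + v_{+-} + v_{-+} + v_{--} \ne 0$ and $\frac{|v_{++}| + |v_{+-}| + |v_{-+}| + |v_{--}|}{|v|} \le \frac{1}{\cos\theta}$. -/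
open InnerProductGeometry Real
open scoped InnerProductSpace

lemma sq_mul_add_add_add_le {k a b c d : ℝ} (hk0 : 0 ≤ k) (hk1 : k ≤ 1)
    (ha : 0 ≤ a) (hb : 0 ≤ b) (hc : 0 ≤ c) (hd : 0 ≤ d) :
    (k * (a + b + c + d)) ^ 2 ≤ a ^ 2 + b ^ 2 + c ^ 2 + d ^ 2 + 2 * (k * (a * b) + k * (a * c)
      + (2 * k ^ 2 - 1) * (a * d) + (2 * k ^ 2 - 1) * (b * c) + k * (b * d) + k * (c * d)) := by
  have hk2 : 0 ≤ 1 - k ^ 2 := by nlinarith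
  have hcross : 0 ≤ 2 * k * (1 - k) * ((a + d) * (b + c)) := by
    have : 0 ≤ 1 - k := by linarith
    positivity
  nlinarith [mul_nonneg hk2 (sq_nonneg (a - d)), mul_nonneg hk2 (sq_nonneg (b - c))]

section InnerProductSpace

variable {V : Type*} [NormedAddCommGroup V] [InnerProductSpace ℝ V]

lemma cos_mul_norm_mul_norm_le_inner {x y : V} {φ : ℝ} (hφ : φ ≤ π) (h : angle x y ≤ φ) :
    cos φ * (‖x‖ * ‖y‖) ≤ ⟪x, y⟫_ℝ := by
  rw [← cos_angle_mul_norm_mul_norm]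
  exact mul_le_mul_of_nonneg_right (cos_le_cos_of_nonneg_of_le_pi (angle_nonneg x y) hφ h)
    (by positivity)

lemma norm_add_add_add_sq_real (a b c d : V) :
    ‖a + b + c + d‖ ^ 2 = ‖a‖ ^ 2 + ‖b‖ ^ 2 + ‖c‖ ^ 2 + ‖d‖ ^ 2 +
      2 * (⟪a, b⟫_ℝ + ⟪a, c⟫_ℝ + ⟪a, d⟫_ℝ + ⟪b, c⟫_ℝ + ⟪b, d⟫_ℝ + ⟪c, d⟫_ℝ) := by
  simp only [norm_add_sq_real, inner_add_left]
  ring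

theorem cos_mul_sum_norm_le_norm_add_add_add {θ : ℝ} (hθ : θ < π / 2) {a b c d : V}
    (hab : angle a b ≤ θ) (hac : angle a c ≤ θ) (hdb : angle d b ≤ θ) (hdc : angle d c ≤ θ) :
    cos θ * (‖a‖ + ‖b‖ + ‖c‖ + ‖d‖) ≤ ‖a + b + c + d‖ := by
  have hθ0 : 0 ≤ θ := (angle_nonneg a b).trans hab
  have hθπ : θ ≤ π := by linarith [pi_pos]
  have hk0 : 0 ≤ cos θ := cos_nonneg_of_mem_Icc ⟨by linarith, hθ.le⟩
  have hk1 : cos θ ≤ 1 := cos_le_one θ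
  have iab := cos_mul_norm_mul_norm_le_inner hθπ hab
  have iac := cos_mul_norm_mul_norm_le_inner hθπ hac
  have idb := cos_mul_norm_mul_norm_le_inner hθπ hdb
  have idc := cos_mul_norm_mul_norm_le_inner hθπ hdc
  have iad : cos (2 * θ) * (‖a‖ * ‖d‖) ≤ ⟪a, d⟫_ℝ :=
    cos_mul_norm_mul_norm_le_inner (by linarith) <| (angle_le_angle_add_angle a b d).trans
      (by rw [angle_comm b d]; linarith)
  have ibc : cos (2 * θ) * (‖b‖ * ‖c‖) ≤ ⟪b, c⟫_ℝ :=
    cos_mul_norm_mul_norm_le_inner (by linarith) <| (angle_le_angle_add_angle b a c).trans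
      (by rw [angle_comm b a]; linarith)
  rw [cos_two_mul] at iad ibc
  refine abs_le_of_sq_le_sq' ?_ (norm_nonneg _) |>.2
  calc (cos θ * (‖a‖ + ‖b‖ + ‖c‖ + ‖d‖)) ^ 2
      ≤ ‖a‖ ^ 2 + ‖b‖ ^ 2 + ‖c‖ ^ 2 + ‖d‖ ^ 2 + 2 * (cos θ * (‖a‖ * ‖b‖) + cos θ * (‖a‖ * ‖c‖)
          + (2 * cos θ ^ 2 - 1) * (‖a‖ * ‖d‖) + (2 * cos θ ^ 2 - 1) * (‖b‖ * ‖c‖)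
          + cos θ * (‖b‖ * ‖d‖) + cos θ * (‖c‖ * ‖d‖)) :=
        sq_mul_add_add_add_le hk0 hk1 (norm_nonneg a) (norm_nonneg b) (norm_nonneg c)
          (norm_nonneg d)
    _ ≤ ‖a + b + c + d‖ ^ 2 := by
        rw [norm_add_add_add_sq_real, real_inner_comm d b, real_inner_comm d c]
        linarith

end InnerProductSpace

lemma cangle_eq_angle (u v : ℂ) : cangle u v = angle u v := by
  rw [angle_comm, angle, Complex.inner, mul_comm ‖v‖, cangle]

theorem stmt2_general (θ : ℝ) (hθπ : θ < Real.pi / 2)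
    (vpp vpm vmp vmm : ℂ)
    (a1 : cangle vpp vpm ≤ θ) (a2 : cangle vpp vmp ≤ θ)
    (a3 : cangle vmm vpm ≤ θ) (a4 : cangle vmm vmp ≤ θ) :
    vpp + vpm + vmp + vmm ≠ 0 ∧
      (‖vpp‖ + ‖vpm‖ + ‖vmp‖ + ‖vmm‖) /
          ‖vpp + vpm + vmp + vmm‖ ≤ 1 / Real.cos θ := by
  simp only [cangle_eq_angle] at a1 a2 a3 a4
  have hvpp : vpp ≠ 0 := by
    rintro rfl
    rw [angle_zero_left] at a1
    linarith
  have hk : 0 < cos θ := cos_pos_of_mem_Ioo ⟨by linarith [pi_pos, angle_nonneg vpp vpm], hθπ⟩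
  have hS : 0 < ‖vpp‖ + ‖vpm‖ + ‖vmp‖ + ‖vmm‖ := by positivity
  have key := cos_mul_sum_norm_le_norm_add_add_add hθπ a1 a2 a3 a4
  have hv : 0 < ‖vpp + vpm + vmp + vmm‖ := (mul_pos hk hS).trans_le key
  refine ⟨norm_pos_iff.1 hv, ?_⟩
  rw [div_le_div_iff₀ hv hk, one_mul, mul_comm]
  exact key

theorem stmt2 (θ : ℝ) (hθ0 : 0 ≤ θ) (hθπ : θ < Real.pi / 2)
    (vpp vpm vmp vmm : ℂ)
    (h1 : vpp ≠ 0) (h2 : vpm ≠ 0) (h3 : vmp ≠ 0) (h4 : vmm ≠ 0)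
    (a1 : cangle vpp vpm ≤ θ) (a2 : cangle vpp vmp ≤ θ)
    (a3 : cangle vmm vpm ≤ θ) (a4 : cangle vmm vmp ≤ θ) :
    vpp + vpm + vmp + vmm ≠ 0 ∧
      (‖vpp‖ + ‖vpm‖ + ‖vmp‖ + ‖vmm‖) /
          ‖vpp + vpm + vmp + vmm‖ ≤ 1 / Real.cos θ :=
  stmt2_general θ hθπ vpp vpm vmp vmm a1 a2 a3 a4
end

section
/- Let $v_{++}, v_{+-}, v_{-+}, v_{--} \in \mathbb{C} \setminus \{0\}$ be nonzero complex numbers such that the angles between $v_{++}$ and $v_{+-}$, between $v_{++}$ and $v_{-+}$, between $v_{--}$ and $v_{+-}$, and between $v_{--}$ and $v_{-+}$ each do not exceed $\theta$ for some $0 \le \theta < \pi/2$, and let $v = v_{++} + v_{+-} + v_{-+} + v_{--}$ (so $v \ne 0$). Then $\left| \mathrm{Im} \frac{v_{++} - v_{+-} - v_{-+} + v_{--}}{v} \right| \le \tan(\theta/2)$. -/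
open ComplexConjugate Real

lemma cos_mul_norm_le_re_of_arccos_le {θ : ℝ} (hθ : θ ≤ π) {z : ℂ}
    (h : arccos (z.re / ‖z‖) ≤ θ) : cos θ * ‖z‖ ≤ z.re := by
  rcases eq_or_ne z 0 with rfl | hz
  · simp
  have hbound := abs_le.mp (Complex.abs_re_div_norm_le_one z)
  have hcos : cos θ ≤ z.re / ‖z‖ := by
    simpa [cos_arccos hbound.1 hbound.2] using
      cos_le_cos_of_nonneg_of_le_pi (arccos_nonneg _) hθ h
  exact (le_div_iff₀ (norm_pos_iff.mpr hz)).mp hcos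

lemma cos_mul_norm_le_re_of_cangle_le {θ : ℝ} (hθ : θ ≤ π) {u v : ℂ}
    (h : cangle u v ≤ θ) : cos θ * ‖u * conj v‖ ≤ (u * conj v).re := by
  refine cos_mul_norm_le_re_of_arccos_le hθ ?_
  rwa [norm_mul, Complex.norm_conj]

lemma cos_mul_norm_add_le_re {c : ℝ} (hc : 0 ≤ c) {z w : ℂ}
    (hz : c * ‖z‖ ≤ z.re) (hw : c * ‖w‖ ≤ w.re) : c * ‖z + w‖ ≤ (z + w).re :=
  calc c * ‖z + w‖ ≤ c * ‖z‖ + c * ‖w‖ := by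
        rw [← mul_add]; exact mul_le_mul_of_nonneg_left (norm_add_le z w) hc
    _ ≤ (z + w).re := by rw [Complex.add_re]; linarith

lemma abs_im_le_tan_half_mul_norm_add_re {θ : ℝ} (hθ0 : 0 ≤ θ) (hθπ : θ < π) {z : ℂ}
    (h : cos θ * ‖z‖ ≤ z.re) : |z.im| ≤ tan (θ / 2) * (‖z‖ + z.re) := by
  have hc : 0 < cos (θ / 2) := cos_pos_of_mem_Ioo ⟨by linarith [pi_pos], by linarith⟩
  have hs : 0 ≤ sin (θ / 2) := sin_nonneg_of_nonneg_of_le_pi (by linarith) (by linarith)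
  have hcos : cos θ = cos (θ / 2) ^ 2 - sin (θ / 2) ^ 2 := by
    rw [← cos_two_mul']; congr 1; ring
  have hnorm : z.im ^ 2 = (‖z‖ - z.re) * (‖z‖ + z.re) := by
    have := Complex.sq_norm z
    rw [Complex.normSq_apply] at this
    linear_combination -this
  have hre : 0 ≤ ‖z‖ + z.re := by linarith [neg_abs_le z.re, Complex.abs_re_le_norm z]
  have hgap : (sin (θ / 2) * (‖z‖ + z.re)) ^ 2 - (‖z‖ - z.re) * (‖z‖ + z.re) * cos (θ / 2) ^ 2
      = (‖z‖ + z.re) * (z.re - cos θ * ‖z‖) := by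
    rw [hcos]; linear_combination (‖z‖ + z.re) * z.re * sin_sq_add_cos_sq (θ / 2)
  rw [tan_eq_sin_div_cos, div_mul_eq_mul_div, le_div_iff₀ hc,
    ← pow_le_pow_iff_left₀ (by positivity) (by positivity) two_ne_zero, mul_pow, sq_abs, hnorm,
    ← sub_nonneg, hgap]
  exact mul_nonneg hre (sub_nonneg.mpr h)

lemma im_sub_div_add (p q : ℂ) :
    ((p - q) / (p + q)).im = 2 * (p * conj q).im / Complex.normSq (p + q) := by
  rw [Complex.div_im]
  simp only [Complex.sub_im, Complex.sub_re, Complex.add_im, Complex.add_re, Complex.mul_im,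
    Complex.conj_re, Complex.conj_im]
  ring

lemma abs_im_sub_div_add_le {t : ℝ} (ht : 0 ≤ t) {p q : ℂ}
    (h : |(p * conj q).im| ≤ t * (‖p * conj q‖ + (p * conj q).re)) :
    |((p - q) / (p + q)).im| ≤ t := by
  rcases eq_or_ne (p + q) 0 with hpq | hpq
  · simpa [hpq] using ht
  have hN : 0 < Complex.normSq (p + q) := Complex.normSq_pos.mpr hpq
  have hAMGM : 2 * ‖p * conj q‖ ≤ Complex.normSq p + Complex.normSq q := by
    rw [norm_mul, Complex.norm_conj, ← Complex.sq_norm, ← Complex.sq_norm]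
    nlinarith [sq_nonneg (‖p‖ - ‖q‖)]
  rw [im_sub_div_add, abs_div, abs_of_pos hN, div_le_iff₀ hN, abs_mul, abs_two,
    Complex.normSq_add]
  nlinarith

theorem stmt3_general (θ : ℝ) (hθ0 : 0 ≤ θ) (hθπ : θ < Real.pi / 2)
    (vpp vpm vmp vmm : ℂ)
    (a1 : cangle vpp vpm ≤ θ) (a2 : cangle vpp vmp ≤ θ)
    (a3 : cangle vmm vpm ≤ θ) (a4 : cangle vmm vmp ≤ θ) :
    |((vpp - vpm - vmp + vmm) / (vpp + vpm + vmp + vmm)).im| ≤ Real.tan (θ / 2) := by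
  have hθ : θ ≤ π := by linarith [pi_pos]
  have hcos : 0 ≤ cos θ := cos_nonneg_of_neg_pi_div_two_le_of_le (by linarith) hθπ.le
  have hP : (vpp + vmm) * conj (vpm + vmp) =
      vpp * conj vpm + vpp * conj vmp + vmm * conj vpm + vmm * conj vmp := by
    rw [map_add]; ring
  have hcone :
      cos θ * ‖(vpp + vmm) * conj (vpm + vmp)‖ ≤ ((vpp + vmm) * conj (vpm + vmp)).re := by
    rw [hP]
    refine cos_mul_norm_add_le_re hcos (cos_mul_norm_add_le_re hcos
      (cos_mul_norm_add_le_re hcos ?_ ?_) ?_) ?_ <;>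
      exact cos_mul_norm_le_re_of_cangle_le hθ ‹_›
  have ht : 0 ≤ tan (θ / 2) := tan_nonneg_of_nonneg_of_le_pi_div_two (by linarith) (by linarith)
  convert abs_im_sub_div_add_le ht (abs_im_le_tan_half_mul_norm_add_re hθ0 (by linarith) hcone)
    using 4 <;> ring

theorem stmt3 (θ : ℝ) (hθ0 : 0 ≤ θ) (hθπ : θ < Real.pi / 2)
    (vpp vpm vmp vmm : ℂ)
    (h1 : vpp ≠ 0) (h2 : vpm ≠ 0) (h3 : vmp ≠ 0) (h4 : vmm ≠ 0)
    (a1 : cangle vpp vpm ≤ θ) (a2 : cangle vpp vmp ≤ θ)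
    (a3 : cangle vmm vpm ≤ θ) (a4 : cangle vmm vmp ≤ θ) :
    |((vpp - vpm - vmp + vmm) / (vpp + vpm + vmp + vmm)).im| ≤ Real.tan (θ / 2) :=
  stmt3_general θ hθ0 hθπ vpp vpm vmp vmm a1 a2 a3 a4
end

section
/- If $w_+, w_-$ are nonzero complex numbers with $w_+ + w_- = 1$ and the angle between $w_+$ and $w_-$ does not exceed $\theta$ for some $0 \le \theta < \pi$, then $|\mathrm{Im}\,w_+| + |\mathrm{Im}\,w_-| \le \tan(\theta/2)$. -/
open ComplexConjugate

-- Holds without side condition: when `cos (x / 2) = 0` both sides are junk zeros.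
lemma Real.tan_half_eq_sin_div_one_add_cos (x : ℝ) :
    Real.tan (x / 2) = Real.sin x / (1 + Real.cos x) := by
  have hx : x = 2 * (x / 2) := by ring
  rw [Real.tan_eq_sin_div_cos, hx, Real.sin_two_mul, Real.cos_two_mul, ← hx]
  rcases eq_or_ne (Real.cos (x / 2)) 0 with h | h
  · simp [h]
  · field_simp
    ring

namespace Complex

lemma tan_half_abs_arg (z : ℂ) : Real.tan (|arg z| / 2) = |z.im| / (‖z‖ + z.re) := by
  rcases eq_or_ne z 0 with rfl | hz
  · simp
  have hnorm : 0 < ‖z‖ := norm_pos_iff.mpr hz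
  rw [Real.tan_half_eq_sin_div_one_add_cos, Real.cos_abs, cos_arg hz,
    ← Real.abs_sin_eq_sin_abs_of_abs_le_pi (abs_arg_le_pi z), sin_arg, abs_div, abs_norm]
  field_simp

lemma two_mul_abs_im_le_tan_half_abs_arg {z : ℂ} (hz : ‖z‖ + z.re ≤ 1 / 2) :
    2 * |z.im| ≤ Real.tan (|arg z| / 2) := by
  rw [tan_half_abs_arg]
  rcases (neg_le_of_abs_le (abs_re_le_norm z)).eq_or_lt with h | h
  · have him : z.im = 0 := by
      have hsq := sq_norm_sub_sq_re z
      rw [← h] at hsq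
      exact pow_eq_zero_iff two_ne_zero |>.mp (by rw [← hsq]; ring)
    simp [him]
  · rw [le_div_iff₀ (by linarith)]
    nlinarith [abs_nonneg z.im]

lemma two_mul_norm_add_re_mul_conj_le (u v : ℂ) :
    2 * (‖u * conj v‖ + (u * conj v).re) ≤ ‖u + v‖ ^ 2 := by
  have h := normSq_add u v
  rw [← Complex.sq_norm, ← Complex.sq_norm, ← Complex.sq_norm] at h
  rw [norm_mul, norm_conj, h]
  nlinarith [sq_nonneg (‖u‖ - ‖v‖)]

lemma im_mul_conj_of_add_eq_one {u v : ℂ} (h : u + v = 1) : (u * conj v).im = u.im := by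
  rw [eq_sub_of_add_eq' h]
  simp only [map_sub, map_one, mul_im, sub_im, one_im, conj_im, sub_re, one_re, conj_re]
  ring

end Complex

open Complex

lemma cangle_eq_abs_arg {u v : ℂ} (hu : u ≠ 0) (hv : v ≠ 0) :
    cangle u v = |arg (u * conj v)| := by
  have huv : u * conj v ≠ 0 := mul_ne_zero hu ((map_ne_zero _).mpr hv)
  refine Real.arccos_eq_of_eq_cos (abs_nonneg _) (abs_arg_le_pi _) ?_
  rw [Real.cos_abs, cos_arg huv, norm_mul, norm_conj]

theorem stmt4_general (θ : ℝ) (hθπ : θ < Real.pi)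
    (wp wm : ℂ) (hwp : wp ≠ 0) (hwm : wm ≠ 0)
    (hsum : wp + wm = 1)
    (hang : cangle wp wm ≤ θ) :
    |wp.im| + |wm.im| ≤ Real.tan (θ / 2) := by
  set z := wp * conj wm
  have hwm_im : wm.im = -wp.im := by
    linarith [congrArg im hsum, add_im wp wm, one_im]
  have hz : ‖z‖ + z.re ≤ 1 / 2 := by
    have h := two_mul_norm_add_re_mul_conj_le wp wm
    rw [hsum, norm_one] at h
    linarith
  have hα : |arg z| ≤ θ := cangle_eq_abs_arg hwp hwm ▸ hang
  have hα0 : 0 ≤ |arg z| := abs_nonneg _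
  calc |wp.im| + |wm.im| = 2 * |z.im| := by
        rw [hwm_im, abs_neg, im_mul_conj_of_add_eq_one hsum]; ring
    _ ≤ Real.tan (|arg z| / 2) := two_mul_abs_im_le_tan_half_abs_arg hz
    _ ≤ Real.tan (θ / 2) :=
        Real.strictMonoOn_tan.monotoneOn ⟨by linarith, by linarith⟩ ⟨by linarith, by linarith⟩
          (by linarith)

theorem stmt4 (θ : ℝ) (hθ0 : 0 ≤ θ) (hθπ : θ < Real.pi)
    (wp wm : ℂ) (hwp : wp ≠ 0) (hwm : wm ≠ 0)
    (hsum : wp + wm = 1)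
    (hang : cangle wp wm ≤ θ) :
    |wp.im| + |wm.im| ≤ Real.tan (θ / 2) :=
  stmt4_general θ hθπ wp wm hwp hwm hsum hang
end

section
/- The function $x \mapsto \frac{\tan x - x}{x^2}$ is increasing on $(0, \pi/2)$. -/
/-!
The derivative of `(tan x - x) / x ^ 2` is `(x tan² x - 2 tan x + 2x) / x³`. The numerator
vanishes at `0` and its derivative is `tan x · (2x (1 + tan² x) - tan x)`, which is positive on
`(0, π/2)` because `2 tan x / (1 + tan² x) = sin 2x < 2x`.
-/

open Real Set

lemma cos_pos_of_mem_Ico_zero_pi_div_two {x : ℝ} (hx : x ∈ Ico 0 (π / 2)) : 0 < cos x :=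
  cos_pos_of_mem_Ioo ⟨by linarith [hx.1, pi_pos], hx.2⟩

lemma hasDerivAt_tan_one_add_tan_sq {x : ℝ} (hx : cos x ≠ 0) :
    HasDerivAt tan (1 + tan x ^ 2) x := by
  simpa only [one_div, ← inv_one_add_tan_sq hx, inv_inv] using hasDerivAt_tan hx

lemma sin_two_mul_eq_two_mul_tan_div {x : ℝ} (hx : cos x ≠ 0) :
    sin (2 * x) = 2 * tan x / (1 + tan x ^ 2) := by
  rw [div_eq_mul_inv, inv_one_add_tan_sq hx, sin_two_mul, tan_eq_sin_div_cos]
  field_simp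

lemma tan_lt_two_mul_mul_one_add_tan_sq {x : ℝ} (hx : x ∈ Ioo 0 (π / 2)) :
    tan x < 2 * x * (1 + tan x ^ 2) := by
  have hcos := cos_pos_of_mem_Ico_zero_pi_div_two (Ioo_subset_Ico_self hx)
  have h := sin_lt (by linarith [hx.1] : 0 < 2 * x)
  rw [sin_two_mul_eq_two_mul_tan_div hcos.ne', div_lt_iff₀ (by positivity)] at h
  linarith [tan_pos_of_pos_of_lt_pi_div_two hx.1 hx.2]

lemma hasDerivAt_mul_tan_sq_sub_two_mul_tan_add_two_mul {x : ℝ} (hx : cos x ≠ 0) :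
    HasDerivAt (fun y => y * tan y ^ 2 - 2 * tan y + 2 * y)
      (tan x * (2 * x * (1 + tan x ^ 2) - tan x)) x := by
  have htan := hasDerivAt_tan_one_add_tan_sq hx
  refine ((((hasDerivAt_id' x).mul (htan.pow 2)).sub (htan.const_mul 2)).add
    ((hasDerivAt_id' x).const_mul 2)).congr_deriv ?_
  simp only [Pi.pow_apply]
  ring

lemma mul_tan_sq_sub_two_mul_tan_add_two_mul_pos {x : ℝ} (hx : x ∈ Ioo 0 (π / 2)) :
    0 < x * tan x ^ 2 - 2 * tan x + 2 * x := by
  have hderiv {y : ℝ} (hy : y ∈ Ico 0 (π / 2)) :=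
    hasDerivAt_mul_tan_sq_sub_two_mul_tan_add_two_mul
      (cos_pos_of_mem_Ico_zero_pi_div_two hy).ne'
  have hmono : StrictMonoOn (fun y => y * tan y ^ 2 - 2 * tan y + 2 * y) (Ico 0 (π / 2)) := by
    refine strictMonoOn_of_hasDerivWithinAt_pos (convex_Ico _ _)
      (f' := fun y => tan y * (2 * y * (1 + tan y ^ 2) - tan y))
      (fun y hy => (hderiv hy).continuousAt.continuousWithinAt) (fun y hy => ?_) (fun y hy => ?_)
    all_goals rw [interior_Ico] at hy
    · exact (hderiv (Ioo_subset_Ico_self hy)).hasDerivWithinAt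
    · exact mul_pos (tan_pos_of_pos_of_lt_pi_div_two hy.1 hy.2)
        (sub_pos.2 (tan_lt_two_mul_mul_one_add_tan_sq hy))
  simpa using hmono ⟨le_rfl, pi_div_two_pos⟩ (Ioo_subset_Ico_self hx) hx.1

lemma hasDerivAt_tan_sub_self_div_sq {x : ℝ} (hcos : cos x ≠ 0) (hx : x ≠ 0) :
    HasDerivAt (fun y => (tan y - y) / y ^ 2)
      ((x * tan x ^ 2 - 2 * tan x + 2 * x) / x ^ 3) x := by
  refine (((hasDerivAt_tan_one_add_tan_sq hcos).sub (hasDerivAt_id' x)).div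
    ((hasDerivAt_id' x).pow 2) (pow_ne_zero 2 hx)).congr_deriv ?_
  simp only [Pi.pow_apply, Pi.sub_apply]
  field_simp
  ring

theorem stmt6 : StrictMonoOn (fun x : ℝ => (Real.tan x - x) / x ^ 2)
    (Set.Ioo 0 (Real.pi / 2)) := by
  have hderiv {x : ℝ} (hx : x ∈ Ioo 0 (π / 2)) :=
    hasDerivAt_tan_sub_self_div_sq
      (cos_pos_of_mem_Ico_zero_pi_div_two (Ioo_subset_Ico_self hx)).ne' hx.1.ne'
  refine strictMonoOn_of_hasDerivWithinAt_pos (convex_Ioo _ _)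
    (f' := fun x => (x * tan x ^ 2 - 2 * tan x + 2 * x) / x ^ 3)
    (fun x hx => (hderiv hx).continuousAt.continuousWithinAt) (fun x hx => ?_) (fun x hx => ?_)
  all_goals rw [interior_Ioo] at hx
  · exact (hderiv hx).hasDerivWithinAt
  · exact div_pos (mul_tan_sq_sub_two_mul_tan_add_two_mul_pos hx) (pow_pos hx.1 3)
end

section
/- For all real $x$ with $0 \le x \le 1/4$, we have $\tan x \le x\left(1 + \frac{x}{10}\right)$. -/
theorem stmt7 (x : ℝ) (h0 : 0 ≤ x) (h1 : x ≤ 1 / 4) :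
    Real.tan x ≤ x * (1 + x / 10) := by
  have hx1 : |x| ≤ 1 := by rw [abs_of_nonneg h0]; linarith
  have hs := abs_le.1 (Real.sin_bound hx1)
  rw [abs_of_nonneg h0] at hs
  have hc : 1 - x ^ 2 / 2 ≤ Real.cos x := Real.one_sub_sq_div_two_le_cos
  have hcpos : 0 < Real.cos x := by nlinarith
  rw [Real.tan_eq_sin_div_cos, div_le_iff₀ hcpos]
  nlinarith [hs.2, sq_nonneg x, pow_nonneg h0 3, pow_nonneg h0 4, mul_nonneg (mul_nonneg h0 h0) h0]
end

section
/- For every real $\delta$ with $0 < \delta < 1$, setting $\theta = \delta/2$, one has $2(1-\delta)\tan\frac{\theta}{2} + \frac{\delta^2}{5\cos(\theta/2)} + \frac{\delta^2}{5} \le \theta$. -/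
theorem stmt8 (δ : ℝ) (h0 : 0 < δ) (h1 : δ < 1) :
    2 * (1 - δ) * Real.tan ((δ / 2) / 2) + δ ^ 2 / (5 * Real.cos ((δ / 2) / 2)) + δ ^ 2 / 5
      ≤ δ / 2 := by
  set x : ℝ := δ / 2 / 2 with hxdef
  have hx0 : 0 < x := by positivity
  have hx4 : x < 1 / 4 := by rw [hxdef]; linarith
  have hcos : 1 - x ^ 2 / 2 ≤ Real.cos x := Real.one_sub_sq_div_two_le_cos
  have hcos9 : (9:ℝ)/10 ≤ Real.cos x := by nlinarith
  have hcospos : 0 < Real.cos x := by linarith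
  have hsin : Real.sin x < x := Real.sin_lt hx0
  have htan : Real.tan x ≤ x * (1 + x ^ 2) := by
    rw [Real.tan_eq_sin_div_cos, div_le_iff₀ hcospos]
    nlinarith [hsin, hcos, sq_nonneg x, sq_nonneg (x^2)]
  have hdiv : δ ^ 2 / (5 * Real.cos x) ≤ δ ^ 2 * 2 / 9 := by
    rw [div_le_div_iff₀ (by positivity) (by norm_num)]
    nlinarith [sq_nonneg δ]
  have h2 : 2 * (1 - δ) * Real.tan x ≤ 2 * (1 - δ) * (x * (1 + x ^ 2)) := by
    apply mul_le_mul_of_nonneg_left htan; linarith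
  have hxδ : x = δ / 4 := by rw [hxdef]; ring
  have hpoly : 2 * (1 - δ) * (x * (1 + x ^ 2)) + δ ^ 2 * 2 / 9 + δ ^ 2 / 5 ≤ δ / 2 := by
    rw [hxδ]
    nlinarith [sq_nonneg δ, mul_pos (mul_pos h0 h0) h0, sq_nonneg (δ^2)]
  linarith
end
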